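/- arXiv:2312.04408 — 2 statements merged into one kernel-verified Lean document; each statement's English description precedes it below -/
import Mathlib

section
/- Suppose v₁, v₂ are continuous functions on [R₀, ∞) × Ω with asymptotics ρ^{1/2} e^{−iκρ} v₁(ρẑ) → A(ẑ) and ρ^{1/2} e^{−iκρ} v₂(ρẑ) → B(ẑ) as ρ → ∞ for a fixed unit vector ẑ, where A(ẑ) ≠ 0. If v₁(ρẑ) = conj(v₂(ρẑ)) for all large ρ, then e^{2iκρ} converges as ρ → ∞ (to conj(B(ẑ))/A(ẑ)), which is a contradiction; hence v₁(ρẑ) = conj(v₂(ρẑ)) cannot hold for all large ρ when A(ẑ) ≠ 0. -/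
/-!
Conjugating the second far-field limit turns `e^{-iκρ}` into `e^{iκρ}`; on the ray where
`v₁ = conj v₂` it becomes `e^{2iκρ}` times the first far-field expression, so dividing by
`A ≠ 0` makes `e^{2iκρ}` converge as `ρ → ∞`. A periodic function with a limit at infinity is
constant, and `e^{2iκρ}` is not.
-/

open Complex ComplexConjugate Filter Topology
open scoped Real

theorem Function.Periodic.eq_of_tendsto_atTop {X : Type*} [TopologicalSpace X] [T2Space X]
    {f : ℝ → X} {c : ℝ} (hf : Function.Periodic f c) (hc : c ≠ 0) {L : X}
    (h : Tendsto f atTop (𝓝 L)) (x : ℝ) : f x = L := by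
  have hf_abs : Function.Periodic f |c| := by
    rcases abs_choice c with hc' | hc' <;> rw [hc']
    exacts [hf, hf.neg]
  have hseq : Tendsto (fun n : ℕ => x + n * |c|) atTop atTop :=
    tendsto_atTop_add_const_left _ x
      (tendsto_natCast_atTop_atTop.atTop_mul_const (abs_pos.mpr hc))
  refine tendsto_nhds_unique ?_ (h.comp hseq)
  exact tendsto_const_nhds.congr fun n => (hf_abs.nat_mul n x).symm

theorem periodic_exp_ofReal_mul_I {κ : ℝ} (hκ : κ ≠ 0) :
    Function.Periodic (fun ρ : ℝ => exp ((κ * ρ : ℝ) * I)) (2 * π / κ) := fun ρ => by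
  simp only [mul_add, mul_div_cancel₀ _ hκ, ofReal_add, add_mul, exp_add, ofReal_mul,
    ofReal_ofNat, exp_two_pi_mul_I, mul_one]

theorem not_tendsto_exp_mul_I_atTop {κ : ℝ} (hκ : κ ≠ 0) (L : ℂ) :
    ¬ Tendsto (fun ρ : ℝ => exp ((κ * ρ : ℝ) * I)) atTop (𝓝 L) := by
  intro h
  have hper := periodic_exp_ofReal_mul_I hκ
  have hne : 2 * π / κ ≠ 0 := div_ne_zero (by positivity) hκ
  have h0 := hper.eq_of_tendsto_atTop hne h 0
  have hquarter := hper.eq_of_tendsto_atTop hne h (π / 2 / κ)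
  simp only [mul_div_cancel₀ _ hκ, ofReal_div, ofReal_ofNat, exp_pi_div_two_mul_I] at hquarter
  simp only [mul_zero, ofReal_zero, zero_mul, exp_zero] at h0
  simpa [Complex.ext_iff] using hquarter.trans h0.symm

theorem tendsto_exp_two_mul_I_of_tendsto_conj {α : Type*} {l : Filter α} {r θ : α → ℝ}
    {w : α → ℂ} {A B : ℂ} (hA : A ≠ 0)
    (hw : Tendsto (fun x => (r x : ℂ) * exp (-(θ x * I)) * w x) l (𝓝 A))
    (hcw : Tendsto (fun x => (r x : ℂ) * exp (-(θ x * I)) * conj (w x)) l (𝓝 B)) :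
    Tendsto (fun x => exp ((2 * θ x : ℝ) * I)) l (𝓝 (conj B / A)) := by
  have hphase (x : α) :
      exp (-(θ x * -I)) = exp ((2 * θ x : ℝ) * I) * exp (-(θ x * I)) := by
    rw [← exp_add]
    push_cast
    ring_nf
  have hprod : Tendsto (fun x => exp ((2 * θ x : ℝ) * I) * ((r x : ℂ) * exp (-(θ x * I)) * w x))
      l (𝓝 (conj B / A * A)) := by
    rw [div_mul_cancel₀ _ hA]
    refine ((continuous_conj.tendsto B).comp hcw).congr fun x => ?_
    simp only [Function.comp_apply, map_mul, conj_ofReal, conj_conj, ← exp_conj, map_neg, conj_I,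
      hphase]
    ring
  exact (tendsto_mul_iff_of_ne_zero hw hA).mp hprod

theorem no_conjugate_relation_of_farfield_limits_general
    (κ : ℝ) (hκ : 0 < κ)
    (zhat : EuclideanSpace ℝ (Fin 2))
    (v₁ v₂ : EuclideanSpace ℝ (Fin 2) → ℂ) (A B : ℂ) (hA : A ≠ 0)
    (h₁ : Tendsto (fun ρ : ℝ =>
        ((Real.sqrt ρ : ℝ) : ℂ) * Complex.exp (-(Complex.I * κ * ρ)) * v₁ (ρ • zhat))
      atTop (nhds A))
    (h₂ : Tendsto (fun ρ : ℝ =>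
        ((Real.sqrt ρ : ℝ) : ℂ) * Complex.exp (-(Complex.I * κ * ρ)) * v₂ (ρ • zhat))
      atTop (nhds B)) :
    ¬ (∀ᶠ ρ : ℝ in atTop, v₁ (ρ • zhat) = (starRingEnd ℂ) (v₂ (ρ • zhat))) := by
  intro hrel
  have hphase : ∀ ρ : ℝ, I * κ * ρ = ((κ * ρ : ℝ) : ℂ) * I := fun ρ => by push_cast; ring
  simp only [hphase] at h₁ h₂
  have hconj : Tendsto (fun ρ : ℝ =>
      ((Real.sqrt ρ : ℝ) : ℂ) * exp (-((κ * ρ : ℝ) * I)) * conj (v₁ (ρ • zhat))) atTop (𝓝 B) :=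
    h₂.congr' (hrel.mono fun ρ hρ => by simp only [hρ, conj_conj])
  refine not_tendsto_exp_mul_I_atTop (mul_ne_zero two_ne_zero hκ.ne') (conj B / A) ?_
  simpa only [mul_assoc] using tendsto_exp_two_mul_I_of_tendsto_conj hA h₁ hconj

/-- If `ρ^{1/2} e^{−iκρ} v₁(ρẑ) → A(ẑ) ≠ 0` and `ρ^{1/2} e^{−iκρ} v₂(ρẑ) → B(ẑ)`
as `ρ → ∞` for a fixed unit direction `ẑ`, then the relation
`v₁(ρẑ) = conj(v₂(ρẑ))` cannot hold for all large `ρ` (it would force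
`e^{2iκρ}` to converge, a contradiction). -/
theorem no_conjugate_relation_of_farfield_limits
    (κ : ℝ) (hκ : 0 < κ)
    (zhat : EuclideanSpace ℝ (Fin 2)) (hzhat : ‖zhat‖ = 1)
    (v₁ v₂ : EuclideanSpace ℝ (Fin 2) → ℂ) (A B : ℂ) (hA : A ≠ 0)
    (h₁ : Tendsto (fun ρ : ℝ =>
        ((Real.sqrt ρ : ℝ) : ℂ) * Complex.exp (-(Complex.I * κ * ρ)) * v₁ (ρ • zhat))
      atTop (nhds A))
    (h₂ : Tendsto (fun ρ : ℝ =>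
        ((Real.sqrt ρ : ℝ) : ℂ) * Complex.exp (-(Complex.I * κ * ρ)) * v₂ (ρ • zhat))
      atTop (nhds B)) :
    ¬ (∀ᶠ ρ : ℝ in atTop, v₁ (ρ • zhat) = (starRingEnd ℂ) (v₂ (ρ • zhat))) :=
  no_conjugate_relation_of_farfield_limits_general κ hκ zhat v₁ v₂ A B hA h₁ h₂
end

section
/- Suppose w^s_{H,1} = w^s_{H,2} on ℝ² \ (D₁ ∪ D₂) (equation of the Helmholtz components), that w^s_{H,2}(x*, z_m) → w^s_{H,2}(x*, x*) ∈ ℂ (a finite limit) along z_m → x*, and that w^s_{H,1}(x*, z_m) = −w^s_{M,2}(x*, z_m) − G_H(x*, z_m) with w^s_{M,2}(x*, ·) continuous and bounded near x* and |G_H(x*, z_m)| → ∞. Then we obtain a contradiction; hence no such point x* exists (i.e., the hypothesis configuration D₁ ≠ D₂ with x* ∈ ∂D₁ \ D̄₂ is impossible). -/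
open Complex Filter

/-- The contradiction argument in the uniqueness proof: if along a sequence
`z_m → x*` one has `w^s_{H,1}(x*,z_m) = w^s_{H,2}(x*,z_m)`, the right side
converges to a finite limit, while
`w^s_{H,1}(x*,z_m) = −w^s_{M,2}(x*,z_m) − G_H(x*,z_m)` with `w^s_{M,2}(x*,·)`
bounded along the sequence and `|G_H(x*,z_m)| → ∞`, then we reach a
contradiction; hence such a configuration (arising from `D₁ ≠ D₂` with
`x* ∈ ∂D₁ \ D̄₂`) is impossible. -/
theorem uniqueness_contradiction_at_boundary_point
    (D₁ D₂ : Set (EuclideanSpace ℝ (Fin 2)))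
    (hD₁ : Bornology.IsBounded D₁) (hD₂ : Bornology.IsBounded D₂)
    (wH₁ wH₂ wM₂ GH : EuclideanSpace ℝ (Fin 2) → EuclideanSpace ℝ (Fin 2) → ℂ)
    (xs : EuclideanSpace ℝ (Fin 2)) (hxs : xs ∈ frontier D₁ ∧ xs ∉ closure D₂)
    (z : ℕ → EuclideanSpace ℝ (Fin 2))
    (hz : Tendsto z atTop (nhds xs))
    (heq : ∀ m, wH₁ xs (z m) = wH₂ xs (z m))
    (L : ℂ)
    (hlim : Tendsto (fun m => wH₂ xs (z m)) atTop (nhds L))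
    (hrep : ∀ m, wH₁ xs (z m) = -wM₂ xs (z m) - GH xs (z m))
    (hbdd : ∃ C : ℝ, ∀ m, ‖wM₂ xs (z m)‖ ≤ C)
    (hblow : Tendsto (fun m => ‖GH xs (z m)‖) atTop atTop) :
    False := by
  obtain ⟨C, hC⟩ := hbdd
  -- GH = -wM₂ - wH₂ along the sequence
  have hGH : ∀ m, GH xs (z m) = -wM₂ xs (z m) - wH₂ xs (z m) := by
    intro m
    have := (heq m).symm.trans (hrep m)
    linear_combination this
  -- wH₂ is eventually bounded since it converges
  have hb2 : ∀ᶠ m in atTop, ‖wH₂ xs (z m)‖ ≤ ‖L‖ + 1 := by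
    have := hlim.norm.eventually (eventually_le_nhds (by linarith [norm_nonneg L] : ‖L‖ < ‖L‖ + 1))
    exact this
  have hub : ∀ᶠ m in atTop, ‖GH xs (z m)‖ ≤ C + (‖L‖ + 1) := by
    filter_upwards [hb2] with m hm
    rw [hGH m]
    calc ‖-wM₂ xs (z m) - wH₂ xs (z m)‖ ≤ ‖-wM₂ xs (z m)‖ + ‖wH₂ xs (z m)‖ :=
          norm_sub_le _ _
      _ ≤ C + (‖L‖ + 1) := by rw [norm_neg]; exact add_le_add (hC m) hm
  have hlb := hblow.eventually_gt_atTop (C + (‖L‖ + 1))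
  obtain ⟨m, h1, h2⟩ := (hub.and hlb).exists
  linarith
end
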